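/- Regard ℝ[[x₁,…,xₙ]] and ℝ[[y₁,…,yₘ]] as subrings of ℝ[[x₁,…,xₙ,y₁,…,yₘ]] in the canonical way. Let I be an ideal of ℝ[[x₁,…,xₙ]] and J an ideal of ℝ[[y₁,…,yₘ]]. If f ∈ ℝ[[x₁,…,xₙ]] with f ∉ I and g ∈ ℝ[[y₁,…,yₘ]] with g ∉ J, then the product f·g does not lie in the ideal of ℝ[[x₁,…,xₙ,y₁,…,yₘ]] generated by I ∪ J. -/

import Mathlib

open Classical

/-- The canonical inclusion `ℝ[[x₁,…,xₙ]] ⊆ ℝ[[x₁,…,xₙ,y₁,…,yₘ]]` (on coefficients). -/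
noncomputable def inclX {n m : ℕ} (f : MvPowerSeries (Fin n) ℝ) :
    MvPowerSeries (Fin n ⊕ Fin m) ℝ :=
  fun d =>
    if h : ∃ e : Fin n →₀ ℕ,
        Finsupp.embDomain ⟨Sum.inl, Sum.inl_injective⟩ e = d then
      MvPowerSeries.coeff h.choose f
    else 0

/-- The canonical inclusion `ℝ[[y₁,…,yₘ]] ⊆ ℝ[[x₁,…,xₙ,y₁,…,yₘ]]` (on coefficients). -/
noncomputable def inclY {n m : ℕ} (g : MvPowerSeries (Fin m) ℝ) :
    MvPowerSeries (Fin n ⊕ Fin m) ℝ :=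
  fun d =>
    if h : ∃ e : Fin m →₀ ℕ,
        Finsupp.embDomain ⟨Sum.inr, Sum.inr_injective⟩ e = d then
      MvPowerSeries.coeff h.choose g
    else 0

/-!
View `K⟦σ ⊕ τ⟧` as power series in `σ` with coefficients in `K⟦τ⟧`. Choose `K`-linear functionals `φ` on `K⟦σ⟧` vanishing on `I`
with `φ f ≠ 0`, and `ψ` on `K⟦τ⟧` vanishing on `J` with `ψ g ≠ 0`. Applying `ψ` coefficientwise and
then `φ` gives an additive map `Φ` on `K⟦σ ⊕ τ⟧` that kills every multiple of an element of `I` or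
of `J`, hence the whole ideal they generate, while `Φ (f * g) = ψ g * φ f ≠ 0`.
-/

theorem Ideal.apply_eq_zero_of_mem_span {A M F : Type*} [Semiring A] [AddCommMonoid M]
    [FunLike F A M] [AddMonoidHomClass F A M] (Φ : F) {S : Set A}
    (hS : ∀ a, ∀ s ∈ S, Φ (a * s) = 0) {x : A} (hx : x ∈ Ideal.span S) : Φ x = 0 := by
  obtain ⟨n, c, s, rfl⟩ := Submodule.mem_span_set'.mp hx
  rw [map_sum]
  exact Finset.sum_eq_zero fun i _ => hS _ _ (s i).2

theorem Submodule.exists_dual_forall_eq_zero_ne_zero {K V : Type*} [Field K] [AddCommGroup V]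
    [Module K V] {W : Submodule K V} {v : V} (hv : v ∉ W) :
    ∃ φ : Module.Dual K V, (∀ w ∈ W, φ w = 0) ∧ φ v ≠ 0 := by
  obtain ⟨φ, hφv, hφW⟩ := W.exists_dual_map_eq_bot_of_notMem hv inferInstance
  exact ⟨φ, fun _ hw => LinearMap.le_ker_iff_map.mpr hφW hw, hφv⟩

theorem Finsupp.sumElim_notMem_range_mapDomain_inl {σ τ : Type*} {d : σ →₀ ℕ} {e : τ →₀ ℕ}
    (he : e ≠ 0) : sumElim d e ∉ Set.range (mapDomain (Function.Embedding.inl : σ ↪ σ ⊕ τ)) := by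
  rintro ⟨k, hk⟩
  rw [← embDomain_eq_mapDomain, embDomain_inl] at hk
  exact he (ext fun b => (DFunLike.congr_fun hk (Sum.inr b)).symm)

theorem Finsupp.sumElim_notMem_range_mapDomain_inr {σ τ : Type*} {d : σ →₀ ℕ} {e : τ →₀ ℕ}
    (hd : d ≠ 0) : sumElim d e ∉ Set.range (mapDomain (Function.Embedding.inr : τ ↪ σ ⊕ τ)) := by
  rintro ⟨k, hk⟩
  rw [← embDomain_eq_mapDomain, embDomain_inr] at hk
  exact hd (ext fun a => (DFunLike.congr_fun hk (Sum.inl a)).symm)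

namespace MvPowerSeries

theorem coeff_rename_embedding_eq_dite {σ τ R : Type*} [CommSemiring R] (e : σ ↪ τ)
    (f : MvPowerSeries σ R) (k : τ →₀ ℕ) :
    coeff k (rename e f) =
      if h : ∃ x, Finsupp.embDomain e x = k then coeff h.choose f else 0 := by
  split_ifs with h
  · conv_lhs => rw [← h.choose_spec]
    exact coeff_embDomain_rename _ _ _
  · refine coeff_rename_eq_zero _ _ ?_
    rintro ⟨x, rfl⟩
    exact h ⟨x, Finsupp.embDomain_eq_mapDomain _ _⟩

section SumToIter

variable {σ τ R : Type*}

section Semiring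

variable [Semiring R]

noncomputable def sumToIterFun (p : MvPowerSeries (σ ⊕ τ) R) :
    MvPowerSeries σ (MvPowerSeries τ R) :=
  fun d e => coeff (Finsupp.sumElim d e) p

theorem coeff_coeff_sumToIterFun (p : MvPowerSeries (σ ⊕ τ) R) (d : σ →₀ ℕ) (e : τ →₀ ℕ) :
    coeff e (coeff d (sumToIterFun p)) = coeff (Finsupp.sumElim d e) p := rfl

theorem sumToIterFun_mul (p q : MvPowerSeries (σ ⊕ τ) R) :
    sumToIterFun (p * q) = sumToIterFun p * sumToIterFun q := by
  ext d e
  simp only [coeff_coeff_sumToIterFun, coeff_mul, map_sum, ← Finset.sum_product']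
  refine Finset.sum_nbij' (fun k => ((k.1.comapDomain Sum.inl Sum.inl_injective.injOn,
      k.2.comapDomain Sum.inl Sum.inl_injective.injOn),
      (k.1.comapDomain Sum.inr Sum.inr_injective.injOn,
      k.2.comapDomain Sum.inr Sum.inr_injective.injOn)))
    (fun x => (Finsupp.sumElim x.1.1 x.2.1, Finsupp.sumElim x.1.2 x.2.2)) ?_ ?_ ?_ ?_ ?_
  all_goals simp_all [Finsupp.ext_iff]

variable (σ τ R) in
noncomputable def sumToIter :
    MvPowerSeries (σ ⊕ τ) R →+* MvPowerSeries σ (MvPowerSeries τ R) where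
  toFun := sumToIterFun
  map_one' := by
    ext d e
    simp only [coeff_coeff_sumToIterFun, coeff_one, Finsupp.ext_iff]
    split_ifs <;> simp_all [coeff_one, Finsupp.ext_iff]
  map_mul' := sumToIterFun_mul
  map_zero' := by ext; simp [coeff_coeff_sumToIterFun]
  map_add' _ _ := by ext; simp [coeff_coeff_sumToIterFun]

theorem coeff_coeff_sumToIter (p : MvPowerSeries (σ ⊕ τ) R) (d : σ →₀ ℕ) (e : τ →₀ ℕ) :
    coeff e (coeff d (sumToIter σ τ R p)) = coeff (Finsupp.sumElim d e) p := rfl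

end Semiring

variable [CommSemiring R]

theorem sumToIter_rename_inl (f : MvPowerSeries σ R) :
    sumToIter σ τ R (rename (Function.Embedding.inl : σ ↪ σ ⊕ τ) f) = map C f := by
  ext d e
  rw [coeff_coeff_sumToIter, coeff_map, coeff_C]
  split_ifs with he
  · rw [he, ← Finsupp.embDomain_inl, coeff_embDomain_rename]
  · exact coeff_rename_eq_zero _ _ (Finsupp.sumElim_notMem_range_mapDomain_inl he)

theorem sumToIter_rename_inr (g : MvPowerSeries τ R) :
    sumToIter σ τ R (rename (Function.Embedding.inr : τ ↪ σ ⊕ τ) g) = C g := by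
  ext d e
  rw [coeff_coeff_sumToIter, coeff_C]
  split_ifs with hd
  · rw [hd, ← Finsupp.embDomain_inr, coeff_embDomain_rename]
  · exact coeff_rename_eq_zero _ _ (Finsupp.sumElim_notMem_range_mapDomain_inr hd)

end SumToIter

section MapLinear

variable {σ K B : Type*} [CommSemiring K] [CommSemiring B] [Algebra K B]

variable (σ) in
noncomputable def mapLinear (φ : B →ₗ[K] K) : MvPowerSeries σ B →ₗ[K] MvPowerSeries σ K :=
  φ.compLeft (σ →₀ ℕ)

theorem coeff_mapLinear (φ : B →ₗ[K] K) (p : MvPowerSeries σ B) (d : σ →₀ ℕ) :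
    coeff d (mapLinear σ φ p) = φ (coeff d p) := rfl

theorem mapLinear_C (φ : B →ₗ[K] K) (b : B) : mapLinear σ φ (C b) = C (φ b) := by
  ext d
  rw [coeff_mapLinear, coeff_C, coeff_C]
  split_ifs <;> simp

theorem mapLinear_map_algebraMap_mul (φ : B →ₗ[K] K) (f : MvPowerSeries σ K)
    (p : MvPowerSeries σ B) :
    mapLinear σ φ (map (algebraMap K B) f * p) = f * mapLinear σ φ p := by
  ext d
  simp only [coeff_mapLinear, coeff_mul, map_sum, coeff_map, ← Algebra.smul_def, map_smul,
    smul_eq_mul]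

theorem mapLinear_C_mul_eq_zero {J : Ideal B} {φ : B →ₗ[K] K} (hφ : ∀ j ∈ J, φ j = 0)
    {j : B} (hj : j ∈ J) (p : MvPowerSeries σ B) : mapLinear σ φ (C j * p) = 0 := by
  ext d
  rw [coeff_mapLinear, coeff_C_mul, map_zero]
  exact hφ _ (J.mul_mem_right _ hj)

end MapLinear

theorem rename_inl_mul_rename_inr_notMem_span {K σ τ : Type*} [Field K]
    (I : Ideal (MvPowerSeries σ K)) (J : Ideal (MvPowerSeries τ K))
    {f : MvPowerSeries σ K} (hf : f ∉ I) {g : MvPowerSeries τ K} (hg : g ∉ J) :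
    rename (Function.Embedding.inl : σ ↪ σ ⊕ τ) f *
        rename (Function.Embedding.inr : τ ↪ σ ⊕ τ) g ∉
      Ideal.span (rename (Function.Embedding.inl : σ ↪ σ ⊕ τ) '' I ∪
        rename (Function.Embedding.inr : τ ↪ σ ⊕ τ) '' J) := by
  obtain ⟨φ, hφI, hφf⟩ :=
    Submodule.exists_dual_forall_eq_zero_ne_zero (W := I.restrictScalars K) hf
  obtain ⟨ψ, hψJ, hψg⟩ :=
    Submodule.exists_dual_forall_eq_zero_ne_zero (W := J.restrictScalars K) hg
  let Φ : MvPowerSeries (σ ⊕ τ) K →+ K := φ.toAddMonoidHom.comp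
    ((mapLinear σ ψ).toAddMonoidHom.comp (sumToIter σ τ K).toAddMonoidHom)
  have hΦ (p : MvPowerSeries (σ ⊕ τ) K) : Φ p = φ (mapLinear σ ψ (sumToIter σ τ K p)) := rfl
  have hΦfg : Φ (rename Function.Embedding.inl f * rename Function.Embedding.inr g) =
      ψ g * φ f := by
    rw [hΦ, map_mul, sumToIter_rename_inl, sumToIter_rename_inr, c_eq_algebraMap,
      mapLinear_map_algebraMap_mul, mapLinear_C, mul_comm, ← smul_eq_C_mul, map_smul,
      smul_eq_mul]
  have hΦspan : ∀ a, ∀ s ∈ rename (Function.Embedding.inl : σ ↪ σ ⊕ τ) '' I ∪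
      rename (Function.Embedding.inr : τ ↪ σ ⊕ τ) '' J, Φ (a * s) = 0 := by
    rintro a _ (⟨i, hi, rfl⟩ | ⟨j, hj, rfl⟩)
    · rw [hΦ, map_mul, sumToIter_rename_inl, c_eq_algebraMap, mul_comm,
        mapLinear_map_algebraMap_mul]
      exact hφI _ (I.mul_mem_right _ hi)
    · rw [hΦ, map_mul, sumToIter_rename_inr, mul_comm, mapLinear_C_mul_eq_zero hψJ hj,
        map_zero]
  intro hmem
  exact mul_ne_zero hψg hφf (hΦfg ▸ Ideal.apply_eq_zero_of_mem_span Φ hΦspan hmem)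

end MvPowerSeries

theorem inclX_eq_rename {n m : ℕ} :
    (inclX : MvPowerSeries (Fin n) ℝ → MvPowerSeries (Fin n ⊕ Fin m) ℝ) =
      MvPowerSeries.rename (Function.Embedding.inl : Fin n ↪ Fin n ⊕ Fin m) := by
  funext f
  ext k
  exact (MvPowerSeries.coeff_rename_embedding_eq_dite _ f k).symm

theorem inclY_eq_rename {n m : ℕ} :
    (inclY : MvPowerSeries (Fin m) ℝ → MvPowerSeries (Fin n ⊕ Fin m) ℝ) =
      MvPowerSeries.rename (Function.Embedding.inr : Fin m ↪ Fin n ⊕ Fin m) := by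
  funext g
  ext k
  exact (MvPowerSeries.coeff_rename_embedding_eq_dite _ g k).symm

theorem stmt_17 {n m : ℕ} (I : Ideal (MvPowerSeries (Fin n) ℝ))
    (J : Ideal (MvPowerSeries (Fin m) ℝ))
    (f : MvPowerSeries (Fin n) ℝ) (hf : f ∉ I)
    (g : MvPowerSeries (Fin m) ℝ) (hg : g ∉ J) :
    (inclX f) * (inclY g) ∉
      Ideal.span (inclX '' (I : Set (MvPowerSeries (Fin n) ℝ)) ∪
        inclY '' (J : Set (MvPowerSeries (Fin m) ℝ))) := by
  rw [inclX_eq_rename, inclY_eq_rename]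
  exact MvPowerSeries.rename_inl_mul_rename_inr_notMem_span I J hf hg
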